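/- Let λ = x + yi be a complex number with y > 0, regarded as a quaternion. For an n×n complex matrix M (regarded as a quaternion matrix with zero j and k parts), define the 4n×4n quaternion matrix X_M = [[4I_n, 0, I_n·j, M·j],[0, 3I_n, I_n·j, I_n·j],[0, 0, 2I_n, 0],[0, 0, 0, I_n]] and the 8n×8n quaternion matrix A_M = [[λ·I_{4n}, X_M],[0, λ·I_{4n}]]. Then for n×n complex matrices M and N: M and N are unitarily similar over ℂ (N = U*MU for some complex unitary U) if and only if A_M and A_N are unitarily similar over ℍ. -/

import Mathlib

open Matrix
open scoped Quaternion

noncomputable section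

/-- A quaternion matrix `U` is unitary if `Uᴴ * U = 1`. -/
def IsUnitaryM {m : Type*} [Fintype m] [DecidableEq m] (U : Matrix m m ℍ[ℝ]) : Prop :=
  Uᴴ * U = 1

/-- `A` and `B` are unitarily similar if `A = Uᴴ * B * U` for some unitary `U`. -/
def UnitarilySimilar {m : Type*} [Fintype m] [DecidableEq m] (A B : Matrix m m ℍ[ℝ]) : Prop :=
  ∃ U : Matrix m m ℍ[ℝ], IsUnitaryM U ∧ A = Uᴴ * B * U

/-- The embedding of `ℂ = ℝ + ℝi` into the quaternions. -/
def cq (z : ℂ) : ℍ[ℝ] := ⟨z.re, z.im, 0, 0⟩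

/-- The quaternion unit `j`. -/
def jq : ℍ[ℝ] := ⟨0, 0, 1, 0⟩

/-- The block matrix `X_M = [[4I, 0, I·j, M·j],[0, 3I, I·j, I·j],[0, 0, 2I, 0],[0, 0, 0, I]]`
built from a complex matrix `M`, indexed by `Fin 4 × Fin n`. -/
def XM {n : ℕ} (M : Matrix (Fin n) (Fin n) ℂ) :
    Matrix (Fin 4 × Fin n) (Fin 4 × Fin n) ℍ[ℝ] :=
  fun x y =>
    let d : ℍ[ℝ] := if x.2 = y.2 then 1 else 0
    if x.1 = 0 ∧ y.1 = 0 then 4 * d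
    else if x.1 = 0 ∧ y.1 = 2 then d * jq
    else if x.1 = 0 ∧ y.1 = 3 then cq (M x.2 y.2) * jq
    else if x.1 = 1 ∧ y.1 = 1 then 3 * d
    else if x.1 = 1 ∧ y.1 = 2 then d * jq
    else if x.1 = 1 ∧ y.1 = 3 then d * jq
    else if x.1 = 2 ∧ y.1 = 2 then 2 * d
    else if x.1 = 3 ∧ y.1 = 3 then d
    else 0

/-- The `8n × 8n` quaternion matrix `A_M = [[λ·I, X_M],[0, λ·I]]`. -/
def AM {n : ℕ} (lam : ℂ) (M : Matrix (Fin n) (Fin n) ℂ) :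
    Matrix ((Fin 4 × Fin n) ⊕ (Fin 4 × Fin n)) ((Fin 4 × Fin n) ⊕ (Fin 4 × Fin n)) ℍ[ℝ] :=
  Matrix.fromBlocks (Matrix.diagonal fun _ => cq lam) (XM M) 0
    (Matrix.diagonal fun _ => cq lam)

/-!
Write a quaternion matrix as `A + B j` with `A`, `B` complex. If a unitary `V` satisfies
`V A_M = A_N V`, the lower left block of `V` commutes with the non-real scalar `λ`, hence is
complex, and then the complex part of the `(1,1)` block equation kills it, because the complex
part `X₀ = diag(4,3,2,1) ⊗ I` of `X_N` is invertible; the same argument for `Vᴴ` kills the upper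
right block. The diagonal blocks now commute with `λ`, so they are complex unitaries `P`, `S`
with `P X₀ = X₀ S` and `P Y_M = Y_N S̄`, where `X_M = X₀ + Y_M j`. As `X₀` is positive definite,
`P = S` and `P` commutes with `X₀`, so `P = diag(P₀, P₁, P₂, P₃)`; the entries of `Y_M` force
`P₀ = P₁ = P̄₂ = P̄₃` and `P₀ M = N P₀`. Conversely, if `N = U* M U` then
`diag(U*, U*, Uᵀ, Uᵀ)`, taken twice, conjugates `A_M` to `A_N`.
-/

open scoped ComplexConjugate

/- A quaternion `q` is `cq (cpart q) + cq (jpart q) * jq`, and `jq * cq z = cq (conj z) * jq`. -/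
def cpart : ℍ[ℝ] →+ ℂ where
  toFun q := ⟨q.re, q.imI⟩
  map_zero' := rfl
  map_add' _ _ := rfl

def jpart : ℍ[ℝ] →+ ℂ where
  toFun q := ⟨q.imJ, q.imK⟩
  map_zero' := rfl
  map_add' _ _ := rfl

@[simp] lemma re_cpart (q : ℍ[ℝ]) : (cpart q).re = q.re := rfl
@[simp] lemma im_cpart (q : ℍ[ℝ]) : (cpart q).im = q.imI := rfl
@[simp] lemma re_jpart (q : ℍ[ℝ]) : (jpart q).re = q.imJ := rfl
@[simp] lemma im_jpart (q : ℍ[ℝ]) : (jpart q).im = q.imK := rfl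

@[simp] lemma cpart_one : cpart 1 = 1 := rfl
@[simp] lemma jpart_one : jpart 1 = 0 := rfl
@[simp] lemma cpart_ofNat (k : ℕ) [k.AtLeastTwo] : cpart (ofNat(k) : ℍ[ℝ]) = ofNat(k) := rfl
@[simp] lemma jpart_ofNat (k : ℕ) [k.AtLeastTwo] : jpart (ofNat(k) : ℍ[ℝ]) = 0 := rfl
@[simp] lemma cpart_cq (z : ℂ) : cpart (cq z) = z := rfl
@[simp] lemma jpart_cq (z : ℂ) : jpart (cq z) = 0 := rfl
@[simp] lemma cpart_jq : cpart jq = 0 := rfl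
@[simp] lemma jpart_jq : jpart jq = 1 := rfl

lemma Quaternion.ext_cpart_jpart {a b : ℍ[ℝ]} (h₁ : cpart a = cpart b)
    (h₂ : jpart a = jpart b) : a = b := by
  rw [Complex.ext_iff] at h₁ h₂
  ext <;> simp_all

lemma cpart_mul (a b : ℍ[ℝ]) :
    cpart (a * b) = cpart a * cpart b - jpart a * conj (jpart b) := by
  apply Complex.ext <;>
    simp only [re_cpart, im_cpart, re_jpart, im_jpart, Quaternion.re_mul, Quaternion.imI_mul,
      Complex.sub_re, Complex.sub_im, Complex.mul_re, Complex.mul_im, Complex.conj_re,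
      Complex.conj_im] <;>
    ring

lemma jpart_mul (a b : ℍ[ℝ]) :
    jpart (a * b) = cpart a * jpart b + jpart a * conj (cpart b) := by
  apply Complex.ext <;>
    simp only [re_cpart, im_cpart, re_jpart, im_jpart, Quaternion.imJ_mul, Quaternion.imK_mul,
      Complex.add_re, Complex.add_im, Complex.mul_re, Complex.mul_im, Complex.conj_re,
      Complex.conj_im] <;>
    ring

@[simp] lemma cpart_star (a : ℍ[ℝ]) : cpart (star a) = conj (cpart a) := by
  apply Complex.ext <;> simp

@[simp] lemma jpart_star (a : ℍ[ℝ]) : jpart (star a) = -jpart a := by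
  apply Complex.ext <;> simp

lemma star_cq (z : ℂ) : star (cq z) = cq (conj z) := by
  apply Quaternion.ext_cpart_jpart <;> simp

lemma cq_injective : Function.Injective cq := fun z w h => by
  simpa using congrArg cpart h

lemma jpart_eq_zero_of_commute {z : ℂ} (hz : z.im ≠ 0) {q : ℍ[ℝ]} (h : cq z * q = q * cq z) :
    jpart q = 0 := by
  have hj := congrArg jpart h
  simp only [jpart_mul, cpart_cq, jpart_cq, zero_mul, add_zero] at hj
  have hz' : z - conj z ≠ 0 := by
    rw [Complex.sub_conj]
    simpa [Complex.ext_iff] using hz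
  exact (mul_eq_zero.1 (by linear_combination hj : (z - conj z) * jpart q = 0)).resolve_left hz'

namespace Matrix

variable {l m o : Type*}

lemma commute_diagonal_const {α : Type*} [Fintype l] [DecidableEq l] [CommSemiring α] (z : α)
    (A : Matrix l l α) : Commute (diagonal fun _ : l => z) A := by
  simpa only [scalar_apply] using scalar_commute z (fun _ => Commute.all _ _) A

lemma ext_map_cpart_map_jpart {A B : Matrix m o ℍ[ℝ]} (h₁ : A.map cpart = B.map cpart)
    (h₂ : A.map jpart = B.map jpart) : A = B :=
  ext fun i j => Quaternion.ext_cpart_jpart (congrFun₂ h₁ i j) (congrFun₂ h₂ i j)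

@[simp] lemma map_cq_map_cpart (A : Matrix m o ℂ) : (A.map cq).map cpart = A := by
  ext; simp

@[simp] lemma map_cq_map_jpart (A : Matrix m o ℂ) : (A.map cq).map jpart = 0 := by
  ext; simp

lemma map_cq_conjTranspose (A : Matrix m o ℂ) : Aᴴ.map cq = (A.map cq)ᴴ := by
  ext i j : 1
  simp [star_cq]

lemma map_cq_injective : Function.Injective fun A : Matrix m o ℂ => A.map cq :=
  map_injective cq_injective

@[simp] lemma map_cq_one [DecidableEq l] : (1 : Matrix l l ℂ).map cq = 1 :=
  Matrix.map_one _ rfl rfl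

lemma diagonal_cq_eq_map [DecidableEq l] (z : ℂ) :
    diagonal (fun _ : l => cq z) = (diagonal fun _ => z).map cq :=
  (diagonal_map rfl).symm

lemma map_cq_map_cpart_of_commute [Fintype l] [DecidableEq l] {z : ℂ} (hz : z.im ≠ 0)
    {B : Matrix l l ℍ[ℝ]} (h : diagonal (fun _ => cq z) * B = B * diagonal (fun _ => cq z)) :
    (B.map cpart).map cq = B := by
  ext i j : 1
  have hij := congrFun₂ h i j
  rw [diagonal_mul, mul_diagonal] at hij
  exact Quaternion.ext_cpart_jpart (by simp) (by simp [jpart_eq_zero_of_commute hz hij])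

variable [Fintype l]

lemma map_cq_mul (A : Matrix m l ℂ) (B : Matrix l o ℂ) :
    (A * B).map cq = A.map cq * B.map cq :=
  Matrix.map_mul (f := (Quaternion.ofComplex : ℂ →+* ℍ[ℝ]))

lemma map_cpart_mul (A : Matrix m l ℍ[ℝ]) (B : Matrix l o ℍ[ℝ]) :
    (A * B).map cpart = A.map cpart * B.map cpart - A.map jpart * (B.map jpart).map conj := by
  ext i j
  simp [mul_apply, map_sum, cpart_mul, Finset.sum_sub_distrib]

lemma map_jpart_mul (A : Matrix m l ℍ[ℝ]) (B : Matrix l o ℍ[ℝ]) :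
    (A * B).map jpart = A.map cpart * B.map jpart + A.map jpart * (B.map cpart).map conj := by
  ext i j
  simp [mul_apply, map_sum, jpart_mul, Finset.sum_add_distrib]

@[simp] lemma map_cpart_map_cq_mul (A : Matrix m l ℂ) (B : Matrix l o ℍ[ℝ]) :
    (A.map cq * B).map cpart = A * B.map cpart := by
  simp [-map_map, map_cpart_mul]

@[simp] lemma map_jpart_map_cq_mul (A : Matrix m l ℂ) (B : Matrix l o ℍ[ℝ]) :
    (A.map cq * B).map jpart = A * B.map jpart := by
  simp [-map_map, map_jpart_mul]

@[simp] lemma map_cpart_mul_map_cq (A : Matrix m l ℍ[ℝ]) (B : Matrix l o ℂ) :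
    (A * B.map cq).map cpart = A.map cpart * B := by
  simp [-map_map, map_cpart_mul]

@[simp] lemma map_jpart_mul_map_cq (A : Matrix m l ℍ[ℝ]) (B : Matrix l o ℂ) :
    (A * B.map cq).map jpart = A.map jpart * B.map conj := by
  simp [-map_map, map_jpart_mul]

end Matrix

section UnitarilySimilar

variable {m : Type*} [Fintype m] [DecidableEq m]

lemma IsUnitaryM.mul_conjTranspose_self {V : Matrix m m ℍ[ℝ]} (hV : IsUnitaryM V) :
    V * Vᴴ = 1 :=
  mul_eq_one_comm.1 hV

lemma UnitarilySimilar.exists_mul_eq_mul {A B : Matrix m m ℍ[ℝ]} (h : UnitarilySimilar A B) :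
    ∃ V, IsUnitaryM V ∧ V * A = B * V ∧ Vᴴ * B = A * Vᴴ := by
  obtain ⟨V, hV, rfl⟩ := h
  refine ⟨V, hV, ?_, ?_⟩
  · simp only [← Matrix.mul_assoc, hV.mul_conjTranspose_self, Matrix.one_mul]
  · simp only [Matrix.mul_assoc, hV.mul_conjTranspose_self, Matrix.mul_one]

lemma unitarilySimilar_of_mul_eq_mul {A B V : Matrix m m ℍ[ℝ]} (hV : IsUnitaryM V)
    (h : V * A = B * V) : UnitarilySimilar A B :=
  ⟨V, hV, by rw [Matrix.mul_assoc, ← h, ← Matrix.mul_assoc, hV, Matrix.one_mul]⟩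

end UnitarilySimilar

section ScalarBlocks

variable {ι : Type*} [Fintype ι] [DecidableEq ι] {lam : ℂ}

lemma commute_map_cq_diagonal_cq (A : Matrix ι ι ℂ) (z : ℂ) :
    Commute (A.map cq) (diagonal fun _ => cq z) := by
  rw [diagonal_cq_eq_map, Commute, SemiconjBy, ← map_cq_mul, ← map_cq_mul,
    (commute_diagonal_const z A).eq]

lemma conjTranspose_mul_self_map_cq_eq_one_iff {A : Matrix ι ι ℂ} :
    (A.map cq)ᴴ * A.map cq = 1 ↔ Aᴴ * A = 1 := by
  rw [← map_cq_conjTranspose, ← map_cq_mul, ← map_cq_one]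
  exact map_cq_injective.eq_iff

/- The lower left block `R` commutes with the non-real scalar `λ`, so it is complex; then the
complex part of the `(1,1)` block equation `P λ = λ P + Y R` reads `0 = Y₀ R`. -/
lemma toBlocks₂₁_eq_zero_of_mul_fromBlocks_eq (hlam : lam.im ≠ 0)
    {X Y : Matrix ι ι ℍ[ℝ]} {W : Matrix (ι ⊕ ι) (ι ⊕ ι) ℍ[ℝ]} (hY : IsUnit (Y.map cpart))
    (h : W * fromBlocks (diagonal fun _ => cq lam) X 0 (diagonal fun _ => cq lam) =
      fromBlocks (diagonal fun _ => cq lam) Y 0 (diagonal fun _ => cq lam) * W) :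
    W.toBlocks₂₁ = 0 := by
  rw [← fromBlocks_toBlocks W, fromBlocks_multiply, fromBlocks_multiply, fromBlocks_inj] at h
  obtain ⟨h₁₁, -, h₂₁, -⟩ := h
  simp only [Matrix.mul_zero, Matrix.zero_mul, add_zero, zero_add] at h₁₁ h₂₁
  obtain ⟨R, hR⟩ : ∃ R : Matrix ι ι ℂ, R.map cq = W.toBlocks₂₁ :=
    ⟨_, map_cq_map_cpart_of_commute hlam h₂₁.symm⟩
  rw [← hR, diagonal_cq_eq_map] at h₁₁
  have hcpart := congrArg (fun A => A.map cpart) h₁₁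
  simp only [map_cpart_mul_map_cq, map_cpart_map_cq_mul, Matrix.map_add _ (map_add cpart),
    (commute_diagonal_const _ _).eq, left_eq_add] at hcpart
  rw [← hR, hY.mul_right_eq_zero.1 hcpart, Matrix.map_zero _ rfl]

lemma exists_intertwine_of_unitarilySimilar_fromBlocks (hlam : lam.im ≠ 0)
    {X Y : Matrix ι ι ℍ[ℝ]} (hX : IsUnit (X.map cpart)) (hY : IsUnit (Y.map cpart))
    (h : UnitarilySimilar (fromBlocks (diagonal fun _ => cq lam) X 0 (diagonal fun _ => cq lam))
      (fromBlocks (diagonal fun _ => cq lam) Y 0 (diagonal fun _ => cq lam))) :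
    ∃ P S : Matrix ι ι ℂ, Pᴴ * P = 1 ∧ Sᴴ * S = 1 ∧ P.map cq * X = Y * S.map cq := by
  obtain ⟨V, hV, hVXY, hVYX⟩ := h.exists_mul_eq_mul
  have h₂₁ := toBlocks₂₁_eq_zero_of_mul_fromBlocks_eq hlam hY hVXY
  have h₁₂ : V.toBlocks₁₂ = 0 := by
    rw [← conjTranspose_eq_zero]
    exact toBlocks₂₁_eq_zero_of_mul_fromBlocks_eq hlam hX hVYX
  rw [← fromBlocks_toBlocks V, h₂₁, h₁₂] at hV hVXY
  rw [fromBlocks_multiply, fromBlocks_multiply, fromBlocks_inj] at hVXY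
  obtain ⟨hP, hPS, -, hS⟩ := hVXY
  simp only [Matrix.mul_zero, Matrix.zero_mul, add_zero, zero_add] at hP hPS hS
  generalize V.toBlocks₁₁ = P, V.toBlocks₂₂ = S at hP hPS hS hV
  obtain ⟨P, rfl⟩ : ∃ P' : Matrix ι ι ℂ, P'.map cq = P :=
    ⟨_, map_cq_map_cpart_of_commute hlam hP.symm⟩
  obtain ⟨S, rfl⟩ : ∃ S' : Matrix ι ι ℂ, S'.map cq = S :=
    ⟨_, map_cq_map_cpart_of_commute hlam hS.symm⟩
  rw [IsUnitaryM, fromBlocks_conjTranspose, fromBlocks_multiply, ← fromBlocks_one,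
    fromBlocks_inj] at hV
  simp only [conjTranspose_zero, Matrix.mul_zero, Matrix.zero_mul, add_zero, zero_add,
    conjTranspose_mul_self_map_cq_eq_one_iff] at hV
  exact ⟨_, _, hV.1, hV.2.2.2, hPS⟩

lemma unitarilySimilar_fromBlocks_of_intertwine {X Y : Matrix ι ι ℍ[ℝ]} {P S : Matrix ι ι ℂ}
    (hP : Pᴴ * P = 1) (hS : Sᴴ * S = 1) (h : P.map cq * X = Y * S.map cq) :
    UnitarilySimilar (fromBlocks (diagonal fun _ => cq lam) X 0 (diagonal fun _ => cq lam))
      (fromBlocks (diagonal fun _ => cq lam) Y 0 (diagonal fun _ => cq lam)) := by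
  refine unitarilySimilar_of_mul_eq_mul (V := fromBlocks (P.map cq) 0 0 (S.map cq)) ?_ ?_
  · rw [IsUnitaryM, fromBlocks_conjTranspose, fromBlocks_multiply,
      conjTranspose_mul_self_map_cq_eq_one_iff.2 hP, conjTranspose_mul_self_map_cq_eq_one_iff.2 hS]
    simp
  · simp [fromBlocks_multiply, h, (commute_map_cq_diagonal_cq P lam).eq,
      (commute_map_cq_diagonal_cq S lam).eq]

lemma unitarilySimilar_fromBlocks_iff (hlam : lam.im ≠ 0) {X Y : Matrix ι ι ℍ[ℝ]}
    (hX : IsUnit (X.map cpart)) (hY : IsUnit (Y.map cpart)) :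
    UnitarilySimilar (fromBlocks (diagonal fun _ => cq lam) X 0 (diagonal fun _ => cq lam))
      (fromBlocks (diagonal fun _ => cq lam) Y 0 (diagonal fun _ => cq lam)) ↔
      ∃ P S : Matrix ι ι ℂ, Pᴴ * P = 1 ∧ Sᴴ * S = 1 ∧ P.map cq * X = Y * S.map cq :=
  ⟨exists_intertwine_of_unitarilySimilar_fromBlocks hlam hX hY,
    fun ⟨_, _, hP, hS, h⟩ => unitarilySimilar_fromBlocks_of_intertwine hP hS h⟩

end ScalarBlocks

section PositiveDiagonal

variable {ι : Type*} [Fintype ι] [DecidableEq ι]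

lemma commute_diagonal_of_commute_diagonal_sq {d : ι → ℝ} (hd : ∀ i, 0 < d i)
    {A : Matrix ι ι ℂ} (h : Commute A (diagonal fun i => (d i : ℂ) ^ 2)) :
    Commute A (diagonal fun i => (d i : ℂ)) := by
  ext i j
  have hij := congrFun₂ h.eq i j
  simp only [mul_diagonal, diagonal_mul] at hij ⊢
  rcases eq_or_ne (A i j) 0 with hA | hA
  · simp [hA]
  · have hsq : d j ^ 2 = d i ^ 2 := by
      exact_mod_cast mul_left_cancel₀ hA (hij.trans (mul_comm _ _))
    rw [(pow_left_inj₀ (hd j).le (hd i).le two_ne_zero).1 hsq, mul_comm]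

lemma eq_and_commute_of_mul_diagonal_eq {d : ι → ℝ} (hd : ∀ i, 0 < d i) {P S : Matrix ι ι ℂ}
    (hP : Pᴴ * P = 1) (hS : Sᴴ * S = 1)
    (h : P * diagonal (fun i => (d i : ℂ)) = diagonal (fun i => (d i : ℂ)) * S) :
    S = P ∧ Commute P (diagonal fun i => (d i : ℂ)) := by
  set D := diagonal fun i => (d i : ℂ)
  have hD : Dᴴ = D := by simp [D, diagonal_conjTranspose, Pi.star_def]
  have hSD : S * D = D * P := by
    have h' := congrArg conjTranspose h
    rw [conjTranspose_mul, conjTranspose_mul, hD] at h'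
    calc S * D = S * D * (Pᴴ * P) := by rw [hP, Matrix.mul_one]
      _ = S * (D * Pᴴ) * P := by simp only [Matrix.mul_assoc]
      _ = D * P := by rw [h', ← Matrix.mul_assoc, mul_eq_one_comm.1 hS, Matrix.one_mul]
  have hcomm : Commute P D := by
    refine commute_diagonal_of_commute_diagonal_sq hd ?_
    have hD2 : (diagonal fun i => (d i : ℂ) ^ 2) = D * D := by simp [D, sq]
    rw [hD2]
    calc P * (D * D) = D * (S * D) := by rw [← Matrix.mul_assoc, h, Matrix.mul_assoc]
      _ = D * D * P := by rw [hSD, Matrix.mul_assoc]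
  have hD_unit : IsUnit D := isUnit_diagonal.2 <| Pi.isUnit_iff.2 fun i =>
    (Complex.ofReal_ne_zero.2 (hd i).ne').isUnit
  exact ⟨hD_unit.mul_left_cancel (h.symm.trans hcomm.eq), hcomm⟩

end PositiveDiagonal

section BlockDiagonal

variable {I K α : Type*} [Fintype I] [DecidableEq I] [Fintype K] [DecidableEq K]

lemma commute_diagonal_fst_iff [CommRing α] [NoZeroDivisors α] {d : I → α}
    (hd : Function.Injective d) {A : Matrix (I × K) (I × K) α} :
    Commute A (diagonal fun x => d x.1) ↔
      ∃ B : I → Matrix K K α, A = comp I I K K α (diagonal B) := by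
  constructor
  · intro h
    refine ⟨fun i => (comp I I K K α).symm A i i, ?_⟩
    ext ⟨i, k⟩ ⟨j, l⟩
    rcases eq_or_ne i j with rfl | hij
    · simp
    · have hA := congrFun₂ h.eq (i, k) (j, l)
      simp only [mul_diagonal, diagonal_mul] at hA
      have : (d j - d i) * A (i, k) (j, l) = 0 := by linear_combination hA
      simp [hij, (mul_eq_zero.1 this).resolve_left (sub_ne_zero.2 (hd.ne hij.symm))]
  · rintro ⟨B, rfl⟩
    rw [← comp_diagonal_diagonal (fun i _ => d i)]
    have hB : Commute (diagonal B) (diagonal fun i => diagonal fun _ : K => d i) := by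
      rw [Commute, SemiconjBy, diagonal_mul_diagonal, diagonal_mul_diagonal]
      exact congrArg diagonal (funext fun i => (commute_diagonal_const (d i) (B i)).eq.symm)
    simpa using hB.map (compRingEquiv I K α)

lemma conjTranspose_mul_self_comp_diagonal_eq_one_iff [Semiring α] [StarRing α]
    {B : I → Matrix K K α} :
    (comp I I K K α (diagonal B))ᴴ * comp I I K K α (diagonal B) = 1 ↔
      ∀ i, (B i)ᴴ * B i = 1 := by
  have hstar : (comp I I K K α (diagonal B))ᴴ = comp I I K K α (diagonal fun i => (B i)ᴴ) := by
    ext ⟨i, k⟩ ⟨j, l⟩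
    rcases eq_or_ne i j with rfl | hij
    · simp
    · simp [diagonal_apply_ne _ hij, diagonal_apply_ne _ hij.symm]
  rw [hstar, ← compRingEquiv_apply, ← compRingEquiv_apply, ← map_mul, ← comp_one,
    ← compRingEquiv_apply, (compRingEquiv I K α).injective.eq_iff, diagonal_mul_diagonal,
    ← diagonal_one, diagonal_eq_diagonal_iff]

end BlockDiagonal

section Gadget

def weight (a : Fin 4) : ℝ := 4 - (a : ℕ)

lemma weight_pos (a : Fin 4) : 0 < weight a := by
  simp only [weight, sub_pos]
  exact_mod_cast a.isLt

lemma weight_injective : Function.Injective weight := fun a b h => by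
  simpa [weight, Fin.val_inj] using h

def XMc (n : ℕ) : Matrix (Fin 4 × Fin n) (Fin 4 × Fin n) ℂ :=
  diagonal fun x => (weight x.1 : ℂ)

def gadget {R : Type*} [Zero R] [One R] (M : R) : Matrix (Fin 4) (Fin 4) R
  | 0, 2 | 1, 2 | 1, 3 => 1
  | 0, 3 => M
  | _, _ => 0

def XMj {n : ℕ} (M : Matrix (Fin n) (Fin n) ℂ) : Matrix (Fin 4 × Fin n) (Fin 4 × Fin n) ℂ :=
  comp (Fin 4) (Fin 4) (Fin n) (Fin n) ℂ (gadget M)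

lemma Fin.four_cases (a : Fin 4) : a = 0 ∨ a = 1 ∨ a = 2 ∨ a = 3 := by
  omega

lemma diagonal_mul_gadget_eq_iff {R : Type*} [Ring R] {B B' : Fin 4 → R} {M N : R} :
    diagonal B * gadget M = gadget N * diagonal B' ↔
      B 0 = B' 2 ∧ B 0 * M = N * B' 3 ∧ B 1 = B' 2 ∧ B 1 = B' 3 := by
  rw [← Matrix.ext_iff]
  simp [Fin.forall_fin_succ, gadget, diagonal_mul, mul_diagonal, and_assoc]

variable {n : ℕ}

lemma map_cpart_XM (M : Matrix (Fin n) (Fin n) ℂ) : (XM M).map cpart = XMc n := by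
  ext ⟨a, p⟩ ⟨b, q⟩ : 1
  obtain rfl | rfl | rfl | rfl := Fin.four_cases a <;>
    obtain rfl | rfl | rfl | rfl := Fin.four_cases b <;>
    simp [XM, XMc, weight, cpart_mul, diagonal_apply, apply_ite cpart] <;> norm_num

lemma map_jpart_XM (M : Matrix (Fin n) (Fin n) ℂ) : (XM M).map jpart = XMj M := by
  ext ⟨a, p⟩ ⟨b, q⟩ : 1
  obtain rfl | rfl | rfl | rfl := Fin.four_cases a <;>
    obtain rfl | rfl | rfl | rfl := Fin.four_cases b <;>
    simp [XM, XMj, gadget, jpart_mul, one_apply, apply_ite jpart]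

lemma isUnit_map_cpart_XM (M : Matrix (Fin n) (Fin n) ℂ) : IsUnit ((XM M).map cpart) := by
  rw [map_cpart_XM]
  exact isUnit_diagonal.2 <| Pi.isUnit_iff.2 fun x =>
    (Complex.ofReal_ne_zero.2 (weight_pos x.1).ne').isUnit

lemma map_cq_mul_XM_eq_iff {M N : Matrix (Fin n) (Fin n) ℂ}
    {P S : Matrix (Fin 4 × Fin n) (Fin 4 × Fin n) ℂ} :
    P.map cq * XM M = XM N * S.map cq ↔
      P * XMc n = XMc n * S ∧ P * XMj M = XMj N * S.map conj := by
  constructor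
  · intro h
    constructor
    · simpa [map_cpart_XM] using congrArg (fun A => A.map cpart) h
    · simpa [map_jpart_XM] using congrArg (fun A => A.map jpart) h
  · rintro ⟨hc, hj⟩
    apply ext_map_cpart_map_jpart <;> simpa [map_cpart_XM, map_jpart_XM]

lemma comp_diagonal_mul_XMj_eq_iff {M N : Matrix (Fin n) (Fin n) ℂ}
    {B : Fin 4 → Matrix (Fin n) (Fin n) ℂ} :
    comp _ _ _ _ ℂ (diagonal B) * XMj M = XMj N * (comp _ _ _ _ ℂ (diagonal B)).map conj ↔
      B 0 = (B 2).map conj ∧ B 0 * M = N * (B 3).map conj ∧ B 1 = (B 2).map conj ∧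
        B 1 = (B 3).map conj := by
  have hconj : (comp _ _ _ _ ℂ (diagonal B)).map conj =
      comp _ _ _ _ ℂ (diagonal fun a => (B a).map conj) := by
    rw [← comp_map_map]
    exact congrArg _ (diagonal_map (by simp))
  rw [hconj]
  simp only [XMj, ← compRingEquiv_apply, ← map_mul, (compRingEquiv _ _ _).injective.eq_iff,
    diagonal_mul_gadget_eq_iff]

lemma exists_unitary_conj_iff_exists_intertwine {M N : Matrix (Fin n) (Fin n) ℂ} :
    (∃ U : Matrix (Fin n) (Fin n) ℂ, Uᴴ * U = 1 ∧ N = Uᴴ * M * U) ↔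
      ∃ P S : Matrix (Fin 4 × Fin n) (Fin 4 × Fin n) ℂ, Pᴴ * P = 1 ∧ Sᴴ * S = 1 ∧
        P * XMc n = XMc n * S ∧ P * XMj M = XMj N * S.map conj := by
  have hweight : Function.Injective fun a => (weight a : ℂ) :=
    Complex.ofReal_injective.comp weight_injective
  constructor
  · rintro ⟨U, hU, rfl⟩
    have hUU : U * Uᴴ = 1 := mul_eq_one_comm.1 hU
    have hUT : (Uᵀ)ᴴ * Uᵀ = 1 := by
      rw [conjTranspose_transpose_eq_transpose_conjTranspose, ← transpose_mul, hUU,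
        transpose_one]
    have hUc : Uᵀ.map conj = Uᴴ := rfl
    set P := comp _ _ _ _ ℂ (diagonal ![Uᴴ, Uᴴ, Uᵀ, Uᵀ])
    have hP : Pᴴ * P = 1 := conjTranspose_mul_self_comp_diagonal_eq_one_iff.2 <| by
      simp [Fin.forall_fin_succ, hUU, hUT]
    refine ⟨P, P, hP, hP, ((commute_diagonal_fst_iff hweight).2 ⟨_, rfl⟩).eq,
      comp_diagonal_mul_XMj_eq_iff.2 ⟨rfl, ?_, rfl, rfl⟩⟩
    simp [Matrix.mul_assoc, hUU, hUc]
  · rintro ⟨P, S, hP, hS, hPS, hY⟩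
    obtain ⟨rfl, hcomm⟩ :=
      eq_and_commute_of_mul_diagonal_eq (d := fun x : Fin 4 × Fin n => weight x.1)
        (fun x => weight_pos x.1) hP hS hPS
    obtain ⟨B, rfl⟩ := (commute_diagonal_fst_iff hweight).1 hcomm
    obtain ⟨h02, h03, h12, h13⟩ := comp_diagonal_mul_XMj_eq_iff.1 hY
    have hB := conjTranspose_mul_self_comp_diagonal_eq_one_iff.1 hP 0
    have hB3 : (B 3).map conj = B 0 := by rw [← h13, h12, ← h02]
    refine ⟨(B 0)ᴴ, by rw [conjTranspose_conjTranspose]; exact mul_eq_one_comm.1 hB, ?_⟩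
    rw [conjTranspose_conjTranspose, h03, hB3, Matrix.mul_assoc, mul_eq_one_comm.1 hB,
      Matrix.mul_one]

end Gadget

/-- **Theorem 3.2(a), key gadget.** For `λ = x + yi` with `y > 0`: two complex matrices
`M`, `N` are unitarily similar over `ℂ` iff the quaternion matrices `A_M`, `A_N` are
unitarily similar over `ℍ`. -/
theorem complex_unitary_similarity_reduces_to_quaternion {n : ℕ} (lam : ℂ)
    (hlam : 0 < lam.im) (M N : Matrix (Fin n) (Fin n) ℂ) :
    (∃ U : Matrix (Fin n) (Fin n) ℂ, Uᴴ * U = 1 ∧ N = Uᴴ * M * U) ↔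
      UnitarilySimilar (AM lam M) (AM lam N) := by
  rw [AM, AM, unitarilySimilar_fromBlocks_iff hlam.ne' (isUnit_map_cpart_XM M)
    (isUnit_map_cpart_XM N), exists_unitary_conj_iff_exists_intertwine]
  simp only [map_cq_mul_XM_eq_iff]
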